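/- Let X ~ Poisson(λ) and δ ≥ 1/√λ. For all sufficiently large λ, P(X ≥ λ(1+δ)) ≤ e^{−λ h(δ)} / √(λ · min{δ, δ²}), where h(δ) = (1+δ)log(1+δ) − δ. -/

import Mathlib

/-- The probability that a Poisson(μ) random variable equals `k`. -/
noncomputable def poissonProb (μ : ℝ) (k : ℕ) : ℝ :=
  Real.exp (-μ) * μ ^ k / (Nat.factorial k : ℝ)

/-- The upper tail `P(X ≥ x)` of a Poisson(μ) random variable. -/
noncomputable def poissonTail (μ : ℝ) (x : ℝ) : ℝ :=
  ∑' k : ℕ, if x ≤ (k : ℝ) then poissonProb μ k else 0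

/-- The large deviation rate function `h(δ) = (1+δ)log(1+δ) − δ`. -/
noncomputable def poissonRate (δ : ℝ) : ℝ := (1 + δ) * Real.log (1 + δ) - δ

/-!
Write `n = ⌈λ(1+δ)⌉`. Since `P(X = n+i) ≤ P(X = n) (λ/(n+1))^i`, the tail is at most
`P(X = n) (n+1)/(n+1-λ) ≤ P(X = n) (1+δ)/δ`. Stirling's lower bound `n! ≥ √(2πn) (n/e)^n` gives
`P(X = n) ≤ e^{-λ h(n/λ-1)} / √(2πn)`, and `h` is increasing on `[0, ∞)`, so the tail is at most
`e^{-λ h(δ)} √(1+δ) / (δ √(2πλ))`. This sharp form holds for all `λ, δ > 0`, and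
`(1+δ) min{δ, δ²} ≤ 2δ²` turns it into the stated bound.
-/

open Real
open scoped Nat

lemma poissonProb_nonneg {μ : ℝ} (hμ : 0 ≤ μ) (k : ℕ) : 0 ≤ poissonProb μ k := by
  unfold poissonProb; positivity

lemma poissonTail_eq_tsum_ceil_add (μ x : ℝ) :
    poissonTail μ x = ∑' i : ℕ, poissonProb μ (⌈x⌉₊ + i) := by
  have hsupp : Function.support (fun k : ℕ => if x ≤ (k : ℝ) then poissonProb μ k else 0) ⊆
      Set.range (⌈x⌉₊ + ·) := by
    intro k hk
    have hxk : x ≤ (k : ℝ) := by by_contra h; exact hk (if_neg h)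
    exact ⟨k - ⌈x⌉₊, Nat.add_sub_cancel' (Nat.ceil_le.2 hxk)⟩
  rw [poissonTail, ← (add_right_injective ⌈x⌉₊).tsum_eq hsupp]
  refine tsum_congr fun i => if_pos ?_
  exact (Nat.le_ceil x).trans (by exact_mod_cast Nat.le_add_right _ _)

lemma poissonProb_add_le {μ : ℝ} (hμ : 0 ≤ μ) (n i : ℕ) :
    poissonProb μ (n + i) ≤ poissonProb μ n * (μ / (n + 1)) ^ i := by
  have hfact : (n ! : ℝ) * ((n : ℝ) + 1) ^ i ≤ ((n + i) ! : ℝ) := by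
    exact_mod_cast Nat.factorial_mul_pow_le_factorial
  calc poissonProb μ (n + i)
      ≤ exp (-μ) * μ ^ (n + i) / ((n ! : ℝ) * ((n : ℝ) + 1) ^ i) :=
        div_le_div_of_nonneg_left (by positivity) (by positivity) hfact
    _ = poissonProb μ n * (μ / (n + 1)) ^ i := by
        rw [poissonProb, pow_add, div_pow]; ring

lemma tsum_poissonProb_add_le {μ : ℝ} (hμ : 0 ≤ μ) {n : ℕ} (hn : μ < n + 1) :
    ∑' i : ℕ, poissonProb μ (n + i) ≤ poissonProb μ n * ((n + 1) / (n + 1 - μ)) := by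
  set r := μ / ((n : ℝ) + 1)
  have hr0 : 0 ≤ r := by positivity
  have hr1 : r < 1 := (div_lt_one (by positivity)).2 hn
  have hgeom : Summable fun i : ℕ => poissonProb μ n * r ^ i :=
    (summable_geometric_of_lt_one hr0 hr1).mul_left _
  have hsum : Summable fun i : ℕ => poissonProb μ (n + i) :=
    hgeom.of_nonneg_of_le (fun i => poissonProb_nonneg hμ _) (poissonProb_add_le hμ n)
  calc ∑' i : ℕ, poissonProb μ (n + i)
      ≤ ∑' i : ℕ, poissonProb μ n * r ^ i := hsum.tsum_le_tsum (poissonProb_add_le hμ n) hgeom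
    _ = poissonProb μ n * ((n + 1) / (n + 1 - μ)) := by
        rw [tsum_mul_left, tsum_geometric_of_lt_one hr0 hr1]
        congr 1
        simp only [r]
        field_simp

lemma poissonProb_le_exp_neg_mul_poissonRate {μ : ℝ} (hμ : 0 < μ) {n : ℕ} (hn : n ≠ 0) :
    poissonProb μ n ≤ exp (-(μ * poissonRate (n / μ - 1))) / √(2 * π * n) := by
  have hn0 : (0 : ℝ) < n := by exact_mod_cast Nat.pos_of_ne_zero hn
  have hexp : exp (-(μ * poissonRate (n / μ - 1))) = exp (-μ) * (exp 1 / (n / μ)) ^ n := by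
    rw [poissonRate, add_sub_cancel, ← exp_log (div_pos hn0 hμ), ← exp_sub, ← exp_nat_mul,
      ← exp_add, exp_log (div_pos hn0 hμ)]
    congr 1
    field_simp
    ring
  calc poissonProb μ n
      ≤ exp (-μ) * μ ^ n / (√(2 * π * n) * (n / exp 1) ^ n) :=
        div_le_div_of_nonneg_left (by positivity) (by positivity) (Stirling.le_factorial_stirling n)
    _ = exp (-(μ * poissonRate (n / μ - 1))) / √(2 * π * n) := by
        rw [hexp]
        field_simp
        rw [← mul_pow]
        congr 1
        field_simp

lemma poissonRate_monotoneOn : MonotoneOn poissonRate (Set.Ici 0) := by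
  intro a ha b _ hab
  have ha : (1 : ℝ) ≤ 1 + a := by simpa using ha
  have hu : (0 : ℝ) < 1 + a := by linarith
  have hv : (0 : ℝ) < 1 + b := by linarith
  have hlog_u : 0 ≤ log (1 + a) := log_nonneg ha
  have hlog_div : 1 - (1 + a) / (1 + b) ≤ log (1 + b) - log (1 + a) := by
    rw [← log_div hv.ne' hu.ne']
    simpa using one_sub_inv_le_log_of_pos (div_pos hv hu)
  have hmul := mul_le_mul_of_nonneg_left hlog_div hv.le
  rw [mul_sub, mul_one, mul_div_cancel₀ _ hv.ne'] at hmul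
  -- with `u = 1 + a ≤ v = 1 + b`: `v log v - u log u = v log (v/u) + (v - u) log u ≥ v - u`
  unfold poissonRate
  nlinarith

lemma div_sub_le_one_add_div {μ δ N : ℝ} (hμ : 0 < μ) (hδ : 0 < δ) (hN : μ * (1 + δ) ≤ N) :
    N / (N - μ) ≤ (1 + δ) / δ := by
  rw [div_le_div_iff₀ (by nlinarith) hδ]
  nlinarith

lemma one_add_mul_min_self_sq_le {δ : ℝ} (hδ : 0 ≤ δ) : (1 + δ) * min δ (δ ^ 2) ≤ 2 * δ ^ 2 := by
  rcases le_total δ 1 with h | h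
  · nlinarith [min_le_right δ (δ ^ 2)]
  · nlinarith [min_le_left δ (δ ^ 2)]

theorem poissonTail_mul_one_add_le {μ δ : ℝ} (hμ : 0 < μ) (hδ : 0 < δ) :
    poissonTail μ (μ * (1 + δ)) ≤
      exp (-(μ * poissonRate δ)) / √(2 * π * μ * δ ^ 2 / (1 + δ)) := by
  set n := ⌈μ * (1 + δ)⌉₊
  have hxn : μ * (1 + δ) ≤ n := Nat.le_ceil _
  have hn : n ≠ 0 := (Nat.ceil_pos.2 (by positivity)).ne'
  have hμn : μ < n + 1 := by nlinarith
  have hδn : δ ≤ n / μ - 1 := by rw [le_sub_iff_add_le, le_div_iff₀ hμ]; linarith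
  have hrate : poissonRate δ ≤ poissonRate (n / μ - 1) :=
    poissonRate_monotoneOn hδ.le (hδ.le.trans hδn) hδn
  have hsqrt : √(2 * π * μ * δ ^ 2 / (1 + δ)) = √(2 * π * (μ * (1 + δ))) * (δ / (1 + δ)) := by
    rw [← sqrt_sq (by positivity : 0 ≤ δ / (1 + δ)), ← sqrt_mul (by positivity)]
    congr 1
    field_simp
  calc poissonTail μ (μ * (1 + δ))
      = ∑' i : ℕ, poissonProb μ (n + i) := poissonTail_eq_tsum_ceil_add _ _
    _ ≤ poissonProb μ n * ((n + 1) / (n + 1 - μ)) := tsum_poissonProb_add_le hμ.le hμn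
    _ ≤ exp (-(μ * poissonRate δ)) / √(2 * π * n) * ((1 + δ) / δ) := by
        refine mul_le_mul ?_ (div_sub_le_one_add_div hμ hδ (by linarith))
          (div_nonneg (by positivity) (by linarith)) (by positivity)
        calc poissonProb μ n ≤ exp (-(μ * poissonRate (n / μ - 1))) / √(2 * π * n) :=
              poissonProb_le_exp_neg_mul_poissonRate hμ hn
          _ ≤ exp (-(μ * poissonRate δ)) / √(2 * π * n) := by gcongr
    _ ≤ exp (-(μ * poissonRate δ)) / √(2 * π * (μ * (1 + δ))) * ((1 + δ) / δ) := by gcongr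
    _ = exp (-(μ * poissonRate δ)) / √(2 * π * μ * δ ^ 2 / (1 + δ)) := by
        rw [hsqrt]
        field_simp

/-- Sharp Poisson upper tail bound: for `X ~ Poisson(λ)` and `δ ≥ 1/√λ`, for all
sufficiently large `λ`, `P(X ≥ λ(1+δ)) ≤ e^{−λ h(δ)} / √(λ min{δ,δ²})`. -/
theorem sharp_poisson_tail_upper :
    ∃ Λ : ℝ, ∀ lam : ℝ, Λ ≤ lam → ∀ δ : ℝ, 1 / Real.sqrt lam ≤ δ →
      poissonTail lam (lam * (1 + δ)) ≤
        Real.exp (-(lam * poissonRate δ)) / Real.sqrt (lam * min δ (δ ^ 2)) := by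
  refine ⟨1, fun lam hlam δ hδ => ?_⟩
  have hlam0 : 0 < lam := by linarith
  have hδ0 : 0 < δ := (one_div_pos.2 (sqrt_pos.2 hlam0)).trans_le hδ
  refine (poissonTail_mul_one_add_le hlam0 hδ0).trans (div_le_div_of_nonneg_left (exp_nonneg _)
    (sqrt_pos.2 (by positivity)) (sqrt_le_sqrt ?_))
  rw [le_div_iff₀ (by positivity)]
  nlinarith [one_add_mul_min_self_sq_le hδ0.le, pi_gt_three, mul_pos hlam0 (pow_pos hδ0 2)]
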